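/- arXiv:1507.06717 — 8 statements merged into one kernel-verified Lean document; each statement's English description precedes it below -/
import Mathlib

section
/- Let X be a locally compact Hausdorff topological space. Then X has the Moving Off Property if and only if every moving off collection for X contains an infinite discrete subfamily of pairwise distinct sets. -/
open Set Topology

/-- A family of sets indexed by `ι` is *discrete* if every point has a neighborhood
meeting at most one member of the family. -/
def IsDiscreteFamily {ι X : Type*} [TopologicalSpace X] (U : ι → Set X) : Prop :=
  ∀ x : X, ∃ V ∈ nhds x, {i : ι | (U i ∩ V).Nonempty}.Subsingleton

/-- A *moving off collection* for `X`: a family of nonempty compact sets such that every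
compact set is disjoint from some member of the family. -/
def IsMovingOff {X : Type*} [TopologicalSpace X] (𝒦 : Set (Set X)) : Prop :=
  (∀ K ∈ 𝒦, K.Nonempty) ∧ (∀ K ∈ 𝒦, IsCompact K) ∧
    ∀ L : Set X, IsCompact L → ∃ K ∈ 𝒦, Disjoint K L

/-- The *Moving Off Property*: every moving off collection contains an infinite subfamily
of pairwise distinct sets admitting a discrete open expansion. -/
def HasMOP (X : Type*) [TopologicalSpace X] : Prop :=
  ∀ 𝒦 : Set (Set X), IsMovingOff 𝒦 →
    ∃ K : ℕ → Set X, (∀ n, K n ∈ 𝒦) ∧ Function.Injective K ∧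
      ∃ U : ℕ → Set X, (∀ n, IsOpen (U n)) ∧ (∀ n, K n ⊆ U n) ∧ IsDiscreteFamily U

/-- For locally compact Hausdorff spaces, the MOP is equivalent to: every moving off collection
contains an infinite discrete subfamily of pairwise distinct sets. -/
theorem mop_iff_discrete_subfamily (X : Type*) [TopologicalSpace X] [T2Space X]
    [LocallyCompactSpace X] :
    HasMOP X ↔
      ∀ 𝒦 : Set (Set X), IsMovingOff 𝒦 →
        ∃ K : ℕ → Set X, (∀ n, K n ∈ 𝒦) ∧ Function.Injective K ∧ IsDiscreteFamily K := by
  constructor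
  · -- Forward: a discrete open expansion yields a discrete subfamily directly.
    intro h 𝒦 h𝒦
    obtain ⟨K, hKmem, hKinj, U, _, hKU, hUdisc⟩ := h 𝒦 h𝒦
    refine ⟨K, hKmem, hKinj, fun x => ?_⟩
    obtain ⟨V, hV, hsub⟩ := hUdisc x
    exact ⟨V, hV, fun i hi j hj =>
      hsub ⟨hi.choose, ⟨hKU i hi.choose_spec.1, hi.choose_spec.2⟩⟩
        ⟨hj.choose, ⟨hKU j hj.choose_spec.1, hj.choose_spec.2⟩⟩⟩
  · -- Backward: fatten the moving off collection.
    intro h 𝒦 h𝒦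
    obtain ⟨hne, hcpt, hmov⟩ := h𝒦
    set 𝒦' : Set (Set X) := {C | IsCompact C ∧ ∃ K ∈ 𝒦, K ⊆ interior C} with h𝒦'
    have h𝒦'mov : IsMovingOff 𝒦' := by
      refine ⟨?_, ?_, ?_⟩
      · rintro C ⟨-, K, hK, hKC⟩
        exact (hne K hK).mono (hKC.trans interior_subset)
      · rintro C ⟨hC, -⟩
        exact hC
      · intro L hL
        obtain ⟨K, hK, hKL⟩ := hmov L hL
        have hKLc : K ⊆ Lᶜ := fun x hx hxL => hKL.ne_of_mem hx hxL rfl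
        obtain ⟨C, hCcpt, hKC, hCL⟩ :=
          exists_compact_between (hcpt K hK) hL.isClosed.isOpen_compl hKLc
        exact ⟨C, ⟨hCcpt, K, hK, hKC⟩, Set.disjoint_left.2 fun x hx => hCL hx⟩
    obtain ⟨C, hCmem, hCinj, hCdisc⟩ := h 𝒦' h𝒦'mov
    -- choose K n ∈ 𝒦 inside interior (C n)
    have hsel : ∀ n, ∃ K ∈ 𝒦, K ⊆ interior (C n) := fun n => (hCmem n).2
    choose K hKmem hKsub using hsel
    have key : ∀ n m : ℕ, ∀ x : X, x ∈ C n → x ∈ C m → n = m := by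
      intro n m x hxn hxm
      obtain ⟨V, hV, hsub⟩ := hCdisc x
      exact hsub ⟨x, hxn, mem_of_mem_nhds hV⟩ ⟨x, hxm, mem_of_mem_nhds hV⟩
    refine ⟨K, hKmem, ?_, fun n => interior (C n), fun n => isOpen_interior,
      fun n => hKsub n, ?_⟩
    · -- injectivity of K
      intro n m hnm
      obtain ⟨x, hx⟩ := hne (K n) (hKmem n)
      have hxn : x ∈ C n := interior_subset (hKsub n hx)
      have hxm : x ∈ C m := interior_subset (hKsub m (hnm ▸ hx))
      exact key n m x hxn hxm
    · -- discreteness of the interiors follows from discreteness of C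
      intro x
      obtain ⟨V, hV, hsub⟩ := hCdisc x
      refine ⟨V, hV, fun i hi j hj => hsub ?_ ?_⟩
      · exact ⟨hi.choose, interior_subset hi.choose_spec.1, hi.choose_spec.2⟩
      · exact ⟨hj.choose, interior_subset hj.choose_spec.1, hj.choose_spec.2⟩
end

section
/- Every countably compact Hausdorff topological space having the Moving Off Property is compact. -/
open Set Topology

/-- A space is *countably compact* if every countable open cover has a finite subcover. -/
def CountablyCompact (X : Type*) [TopologicalSpace X] : Prop :=
  ∀ U : ℕ → Set X, (∀ n, IsOpen (U n)) → (⋃ n, U n) = Set.univ →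
    ∃ s : Finset ℕ, (⋃ n ∈ s, U n) = Set.univ

/-- Countably compact Hausdorff spaces with the Moving Off Property are compact. -/
theorem compactSpace_of_countablyCompact_mop (X : Type*) [TopologicalSpace X] [T2Space X]
    (hcc : CountablyCompact X) (hmop : HasMOP X) : CompactSpace X := by
  by_contra hXc
  have hnc : ¬ IsCompact (Set.univ : Set X) := fun h => hXc ⟨h⟩
  -- the singletons form a moving off collection
  have hmo : IsMovingOff (Set.range (fun x : X => ({x} : Set X))) := by
    refine ⟨?_, ?_, ?_⟩
    · rintro K ⟨x, rfl⟩; exact ⟨x, rfl⟩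
    · rintro K ⟨x, rfl⟩; exact isCompact_singleton
    · intro L hL
      have hLne : L ≠ Set.univ := by rintro rfl; exact hnc hL
      obtain ⟨x, hx⟩ : ∃ x, x ∉ L := by
        by_contra h; push_neg at h
        exact hLne (Set.eq_univ_of_forall h)
      exact ⟨{x}, ⟨x, rfl⟩, Set.disjoint_singleton_left.mpr hx⟩
  obtain ⟨K, hK𝒦, hKinj, U, hUo, hKU, hUd⟩ := hmop _ hmo
  choose p hp using fun n => hK𝒦 n
  -- hp n : {p n} = K n
  have hpK : ∀ n, p n ∈ K n := fun n => (hp n) ▸ Set.mem_singleton (p n)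
  have hpU : ∀ n, p n ∈ U n := fun n => hKU n (hpK n)
  have hpinj : Function.Injective p := by
    intro m k hmk
    apply hKinj
    rw [← hp m, ← hp k, hmk]
  -- tail sets
  set S : ℕ → Set X := fun n => p '' {m | n ≤ m} with hS
  have hSclosed : ∀ n, IsClosed (S n) := by
    intro n
    rw [← isOpen_compl_iff, isOpen_iff_mem_nhds]
    intro x hx
    obtain ⟨V, hV, hsub⟩ := hUd x
    obtain ⟨O, hOV, hOopen, hxO⟩ := mem_nhds_iff.mp hV
    have key : ∀ m k : ℕ, p m ∈ O → p k ∈ O → m = k := by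
      intro m k hm hk
      exact hsub (⟨p m, hpU m, hOV hm⟩ : (U m ∩ V).Nonempty)
        (⟨p k, hpU k, hOV hk⟩ : (U k ∩ V).Nonempty)
    by_cases hex : ∃ j, n ≤ j ∧ p j ∈ O
    · obtain ⟨j, hnj, hjO⟩ := hex
      have hpjS : p j ∈ S n := ⟨j, hnj, rfl⟩
      have hxj : x ≠ p j := fun h => hx (h ▸ hpjS)
      refine Filter.mem_of_superset
        ((hOopen.sdiff isClosed_singleton).mem_nhds ⟨hxO, hxj⟩) ?_
      rintro y ⟨hyO, hyj⟩ ⟨m, hnm, rfl⟩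
      exact hyj (by rw [key m j hyO hjO]; exact Set.mem_singleton _)
    · push_neg at hex
      refine Filter.mem_of_superset (hOopen.mem_nhds hxO) ?_
      rintro y hyO ⟨m, hnm, rfl⟩
      exact hex m hnm hyO
  -- countable open cover with no finite subcover
  have hcov : (⋃ n, (S n)ᶜ) = Set.univ := by
    apply Set.eq_univ_of_forall
    intro x
    by_cases hx : ∃ m, x = p m
    · obtain ⟨m, rfl⟩ := hx
      refine Set.mem_iUnion.mpr ⟨m + 1, ?_⟩
      rintro ⟨k, hk, hkm⟩
      have h1 := hpinj hkm
      have h2 : m + 1 ≤ k := hk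
      omega
    · refine Set.mem_iUnion.mpr ⟨0, ?_⟩
      rintro ⟨k, _, hkx⟩
      exact hx ⟨k, hkx.symm⟩
  obtain ⟨s, hs⟩ := hcc (fun n => (S n)ᶜ) (fun n => (hSclosed n).isOpen_compl) hcov
  set N := s.sup id + 1 with hN
  have hpN : p N ∈ ⋃ n ∈ s, (S n)ᶜ := hs ▸ Set.mem_univ _
  obtain ⟨n, hns, hpn⟩ := Set.mem_iUnion₂.mp hpN
  exact hpn ⟨N, le_trans (Finset.le_sup (f := id) hns) (Nat.le_succ _), rfl⟩
end

section
/- Every first countable Hausdorff topological space having the Moving Off Property is locally compact. -/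
open Set Topology Filter

/-!
In a Hausdorff space it suffices that every point has a compact neighbourhood.
Suppose `x` has none, and let `V n` be a decreasing neighbourhood basis
at `x`. The Moving Off Property first yields a locally finite sequence `C n` of nonempty
compact sets, which therefore moves off every compact set. The compact sets meeting both
`V N` and `C N` for some `N` then form a moving off collection (take `{y} ∪ C N` with
`y ∈ V N \ L` and `C N` disjoint from `L`), so it contains a locally finite sequence `M j`,
say with `M j` meeting `V (N j)` and `C (N j)`. Near `x` only finitely many `M j` meet `V m`,
which forces `N j < m` for almost all `j`; but then almost all `M j` meet the compact set
`C 0 ∪ ⋯ ∪ C m`, contradicting local finiteness once more.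
-/

section

variable {X : Type*} [TopologicalSpace X]

theorem IsDiscreteFamily.mono {ι : Type*} {U K : ι → Set X} (hU : IsDiscreteFamily U)
    (hKU : ∀ i, K i ⊆ U i) : IsDiscreteFamily K := fun x => by
  obtain ⟨V, hV, hsub⟩ := hU x
  exact ⟨V, hV, hsub.anti fun i ⟨y, hyK, hyV⟩ => ⟨y, hKU i hyK, hyV⟩⟩

theorem IsDiscreteFamily.locallyFinite {ι : Type*} {U : ι → Set X} (hU : IsDiscreteFamily U) :
    LocallyFinite U := fun x => by
  obtain ⟨V, hV, hsub⟩ := hU x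
  exact ⟨V, hV, hsub.finite⟩

theorem HasMOP.exists_locallyFinite (hX : HasMOP X) {𝒦 : Set (Set X)} (h𝒦 : IsMovingOff 𝒦) :
    ∃ K : ℕ → Set X, (∀ n, K n ∈ 𝒦) ∧ LocallyFinite K := by
  obtain ⟨K, hK𝒦, -, U, -, hKU, hU⟩ := hX 𝒦 h𝒦
  exact ⟨K, hK𝒦, (hU.mono hKU).locallyFinite⟩

theorem LocallyFinite.exists_disjoint_of_isCompact {ι : Type*} [Infinite ι] {K : ι → Set X}
    (hK : LocallyFinite K) {L : Set X} (hL : IsCompact L) : ∃ i, Disjoint (K i) L := by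
  obtain ⟨i, hi⟩ := (hK.finite_nonempty_inter_compact hL).infinite_compl.nonempty
  exact ⟨i, disjoint_iff_inter_eq_empty.mpr (not_nonempty_iff_eq_empty.mp hi)⟩

theorem isMovingOff_setOf_nonempty_isCompact [NoncompactSpace X] :
    IsMovingOff {K : Set X | K.Nonempty ∧ IsCompact K} := by
  refine ⟨fun K hK => hK.1, fun K hK => hK.2, fun L hL => ?_⟩
  obtain ⟨y, hy⟩ := (ne_univ_iff_exists_notMem L).mp hL.ne_univ
  exact ⟨{y}, ⟨singleton_nonempty y, isCompact_singleton⟩, disjoint_singleton_left.mpr hy⟩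

theorem HasMOP.exists_isMovingOff_range [NoncompactSpace X] (hX : HasMOP X) :
    ∃ C : ℕ → Set X, IsMovingOff (range C) := by
  obtain ⟨C, hC, hCfin⟩ := hX.exists_locallyFinite isMovingOff_setOf_nonempty_isCompact
  refine ⟨C, forall_mem_range.mpr fun n => (hC n).1, forall_mem_range.mpr fun n => (hC n).2,
    fun L hL => ?_⟩
  obtain ⟨n, hn⟩ := hCfin.exists_disjoint_of_isCompact hL
  exact ⟨C n, mem_range_self n, hn⟩

theorem isMovingOff_setOf_meets {x : X} (hx : ∀ K, IsCompact K → K ∉ 𝓝 x) {V : ℕ → Set X}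
    (hV : ∀ n, V n ∈ 𝓝 x) {C : ℕ → Set X} (hC : IsMovingOff (range C)) :
    IsMovingOff {K | IsCompact K ∧ ∃ N, (K ∩ V N).Nonempty ∧ (K ∩ C N).Nonempty} := by
  refine ⟨fun K ⟨_, N, hN, _⟩ => hN.mono inter_subset_left, fun K hK => hK.1, fun L hL => ?_⟩
  obtain ⟨-, ⟨N, rfl⟩, hN⟩ := hC.2.2 L hL
  obtain ⟨y, hyV, hyL⟩ : (V N \ L).Nonempty :=
    sdiff_nonempty.mpr fun h => hx L hL (mem_of_superset (hV N) h)
  obtain ⟨z, hz⟩ := hC.1 _ (mem_range_self N)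
  refine ⟨insert y (C N), ⟨(hC.2.1 _ (mem_range_self N)).insert y, N, ⟨y, mem_insert y _, hyV⟩,
    ⟨z, mem_insert_of_mem y hz, hz⟩⟩, ?_⟩
  exact disjoint_insert_left.mpr ⟨hyL, hN⟩

theorem not_locallyFinite_of_meets {x : X} {V : ℕ → Set X} (hV : (𝓝 x).HasAntitoneBasis V)
    {C : ℕ → Set X} (hC : ∀ n, IsCompact (C n)) {M : ℕ → Set X} {N : ℕ → ℕ}
    (hMV : ∀ j, (M j ∩ V (N j)).Nonempty) (hMC : ∀ j, (M j ∩ C (N j)).Nonempty) :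
    ¬LocallyFinite M := by
  intro hM
  obtain ⟨t, ht, hfin⟩ := hM x
  obtain ⟨m, hm⟩ := hV.mem_iff.mp ht
  have hnear : {j | (M j ∩ V m).Nonempty}.Finite :=
    hfin.subset fun j => Nonempty.mono (inter_subset_inter_right _ hm)
  have hfar : {j | (M j ∩ accumulate C m).Nonempty}.Finite :=
    hM.finite_nonempty_inter_compact (isCompact_accumulate hC m)
  refine infinite_univ ((hnear.union hfar).subset fun j _ => ?_)
  rcases le_total m (N j) with h | h
  · exact Or.inl ((hMV j).mono (inter_subset_inter_right _ (hV.antitone h)))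
  · exact Or.inr ((hMC j).mono (inter_subset_inter_right _ (subset_accumulate.trans
      (monotone_accumulate h))))

end

/-- First countable Hausdorff spaces with the Moving Off Property are locally compact. -/
theorem locallyCompact_of_firstCountable_mop (X : Type*) [TopologicalSpace X] [T2Space X]
    [FirstCountableTopology X] (hmop : HasMOP X) : LocallyCompactSpace X := by
  suffices WeaklyLocallyCompactSpace X from inferInstance
  refine ⟨fun x => ?_⟩
  by_contra! hx
  have : NoncompactSpace X := ⟨fun h => hx univ h univ_mem⟩
  obtain ⟨C, hC⟩ := hmop.exists_isMovingOff_range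
  obtain ⟨V, hV⟩ := (𝓝 x).exists_antitone_basis
  obtain ⟨M, hM, hMfin⟩ :=
    hmop.exists_locallyFinite (isMovingOff_setOf_meets hx hV.mem hC)
  choose N hMV hMC using fun j => (hM j).2
  exact not_locallyFinite_of_meets hV (fun n => hC.2.1 _ (mem_range_self n)) hMV hMC hMfin
end

section
/- Every locally compact, paracompact Hausdorff topological space has the Moving Off Property. -/
open Set Topology

/-- The "saturation" of a set `C` with respect to a family `v`: the union of the closures of
all members of the family whose closure meets `C`. -/
def MOPsatur {ι X : Type*} [TopologicalSpace X] (v : ι → Set X) (C : Set X) : Set X :=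
  ⋃ i ∈ {i : ι | (closure (v i) ∩ C).Nonempty}, closure (v i)

section MOPsatur

variable {ι X : Type*} [TopologicalSpace X] {v : ι → Set X} {C D : Set X}

theorem mem_MOPsatur {x : X} :
    x ∈ MOPsatur v C ↔ ∃ i, (closure (v i) ∩ C).Nonempty ∧ x ∈ closure (v i) := by
  simp [MOPsatur]

theorem MOPsatur_mono (h : C ⊆ D) : MOPsatur v C ⊆ MOPsatur v D := by
  intro x hx
  rcases mem_MOPsatur.1 hx with ⟨i, hne, hxi⟩
  exact mem_MOPsatur.2 ⟨i, hne.mono (inter_subset_inter_right _ h), hxi⟩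

theorem closure_subset_MOPsatur {i : ι} (h : (closure (v i) ∩ C).Nonempty) :
    closure (v i) ⊆ MOPsatur v C :=
  subset_biUnion_of_mem (u := fun i => closure (v i)) h

theorem subset_MOPsatur (hcov : ∀ x : X, ∃ i, x ∈ v i) : C ⊆ MOPsatur v C := by
  intro x hx
  rcases hcov x with ⟨i, hxi⟩
  exact mem_MOPsatur.2 ⟨i, ⟨x, subset_closure hxi, hx⟩, subset_closure hxi⟩

theorem MOPsatur_isCompact (hlf : LocallyFinite v) (hcl : ∀ i, IsCompact (closure (v i)))
    (hC : IsCompact C) : IsCompact (MOPsatur v C) := by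
  have hfin : {i : ι | (closure (v i) ∩ C).Nonempty}.Finite :=
    hlf.closure.finite_nonempty_inter_compact hC
  exact hfin.isCompact_biUnion fun i _ => hcl i

end MOPsatur

/-- Locally compact paracompact Hausdorff spaces have the Moving Off Property. -/
theorem mop_of_locallyCompact_paracompact (X : Type*) [TopologicalSpace X] [T2Space X]
    [LocallyCompactSpace X] [ParacompactSpace X] : HasMOP X := by
  intro 𝒦 hmo
  -- a cover of X by open sets with compact closures
  choose W hWc hWn using fun x : X => exists_compact_mem_nhds x
  have hucov : ⋃ x, interior (W x) = univ :=
    iUnion_eq_univ_iff.2 fun x => ⟨x, mem_interior_iff_mem_nhds.2 (hWn x)⟩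
  obtain ⟨v, hvo, hvcov, hvlf, hvW⟩ :=
    precise_refinement (fun x => interior (W x)) (fun _ => isOpen_interior) hucov
  have hcov : ∀ x : X, ∃ i, x ∈ v i := fun x => mem_iUnion.1 (hvcov ▸ mem_univ x)
  have hvcl : ∀ i, IsCompact (closure (v i)) := by
    intro i
    refine (hWc i).of_isClosed_subset isClosed_closure ?_
    calc closure (v i) ⊆ closure (interior (W i)) := closure_mono (hvW i)
      _ ⊆ closure (W i) := closure_mono interior_subset
      _ = W i := IsClosed.closure_eq ((hWc i).isClosed)
  set T : Set X → Set X := MOPsatur v with hT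
  have hTcomp : ∀ C : Set X, IsCompact C → IsCompact (T C) :=
    fun C hC => MOPsatur_isCompact hvlf hvcl hC
  have hTmono : ∀ C D : Set X, C ⊆ D → T C ⊆ T D := fun C D h => MOPsatur_mono h
  -- the choice function for the moving off collection
  classical
  set g : Set X → Set X := fun L => if h : IsCompact L then (hmo.2.2 L h).choose else ∅ with hg
  have hgspec : ∀ L : Set X, IsCompact L → g L ∈ 𝒦 ∧ Disjoint (g L) L := by
    intro L hL
    rw [hg]
    simp only [dif_pos hL]
    obtain ⟨h1, h2⟩ := (hmo.2.2 L hL).choose_spec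
    exact ⟨h1, h2⟩
  -- the recursive construction
  set L : ℕ → Set X := fun n => Nat.rec (∅ : Set X) (fun _ Ln => Ln ∪ g (T (T (T (T Ln))))) n
    with hLdef
  set K : ℕ → Set X := fun n => g (T (T (T (T (L n))))) with hKdef
  have hLs : ∀ n, L (n + 1) = L n ∪ K n := fun n => rfl
  have hLcomp : ∀ n, IsCompact (L n) := by
    intro n
    induction n with
    | zero => exact isCompact_empty
    | succ n ih =>
      rw [hLs n]
      exact ih.union (hmo.2.1 _ (hgspec _ (hTcomp _ (hTcomp _ (hTcomp _ (hTcomp _ ih))))).1)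
  have hT4comp : ∀ n, IsCompact (T (T (T (T (L n))))) :=
    fun n => hTcomp _ (hTcomp _ (hTcomp _ (hTcomp _ (hLcomp n))))
  have hK𝒦 : ∀ n, K n ∈ 𝒦 := fun n => (hgspec _ (hT4comp n)).1
  have hKdisj : ∀ n, Disjoint (K n) (T (T (T (T (L n))))) := fun n => (hgspec _ (hT4comp n)).2
  have hLmono : ∀ m n : ℕ, m ≤ n → L m ⊆ L n := by
    intro m n h
    induction n with
    | zero => simp [Nat.le_zero.1 h]
    | succ n ih =>
      rcases Nat.lt_or_ge m (n + 1) with h' | h'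
      · exact (ih (Nat.lt_succ_iff.1 h')).trans (by rw [hLs n]; exact subset_union_left)
      · have : m = n + 1 := le_antisymm h h'
        subst this; exact Subset.rfl
  have hKL : ∀ m n : ℕ, m < n → K m ⊆ L n := by
    intro m n h
    have h1 : K m ⊆ L (m + 1) := by rw [hLs m]; exact subset_union_right
    exact h1.trans (hLmono _ _ h)
  have hsubT : ∀ C : Set X, C ⊆ T C := fun C => subset_MOPsatur hcov
  -- K n ⊆ T⁴ (L m) for n < m
  have hKT4 : ∀ n m : ℕ, n < m → K n ⊆ T (T (T (T (L m)))) := by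
    intro n m h
    exact (hKL n m h).trans ((hsubT _).trans ((hTmono _ _ (hsubT _)).trans
      ((hTmono _ _ (hTmono _ _ (hsubT _))).trans
        (hTmono _ _ (hTmono _ _ (hTmono _ _ (hsubT _)))))))
  -- distinctness
  have hKne : ∀ n m : ℕ, n < m → K n ≠ K m := by
    intro n m h hEq
    obtain ⟨y, hy⟩ := hmo.1 _ (hK𝒦 n)
    have hy' : y ∈ T (T (T (T (L m)))) := hKT4 n m h hy
    have : y ∈ K m := hEq ▸ hy
    exact (hKdisj m).ne_of_mem this hy' rfl
  have hKinj : Function.Injective K := by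
    intro n m h
    by_contra hne
    rcases Nat.lt_or_ge n m with h' | h'
    · exact hKne n m h' h
    · exact hKne m n (lt_of_le_of_ne h' (Ne.symm hne)) h.symm
  -- the open expansions
  set U : ℕ → Set X := fun n => ⋃ i ∈ {i | (v i ∩ K n).Nonempty}, v i with hU
  have hUopen : ∀ n, IsOpen (U n) := fun n => isOpen_biUnion fun i _ => hvo i
  have hKU : ∀ n, K n ⊆ U n := by
    intro n x hx
    rcases hcov x with ⟨i, hxi⟩
    exact mem_biUnion (⟨x, hxi, hx⟩ : (v i ∩ K n).Nonempty) hxi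
  refine ⟨K, hK𝒦, hKinj, U, hUopen, hKU, ?_⟩
  intro x
  rcases hcov x with ⟨i₀, hxi₀⟩
  refine ⟨v i₀, (hvo i₀).mem_nhds hxi₀, ?_⟩
  -- membership in T (T (K n))
  have hmemT2 : ∀ n : ℕ, (U n ∩ v i₀).Nonempty → x ∈ T (T (K n)) := by
    intro n ⟨z, hzU, hzv⟩
    rw [hU] at hzU
    simp only [mem_iUnion, mem_setOf_eq, exists_prop] at hzU
    obtain ⟨j, hjne, hzj⟩ := hzU
    have h1 : closure (v j) ⊆ T (K n) :=
      closure_subset_MOPsatur (hjne.mono (inter_subset_inter_left _ subset_closure))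
    have h2 : (closure (v i₀) ∩ T (K n)).Nonempty :=
      ⟨z, subset_closure hzv, h1 (subset_closure hzj)⟩
    exact closure_subset_MOPsatur h2 (subset_closure hxi₀)
  -- two indices whose expansions meet v i₀ must be equal
  have hlt : ∀ n m : ℕ, n < m → x ∈ T (T (K n)) → x ∈ T (T (K m)) → False := by
    intro n m hnm hxn hxm
    have hxLm : x ∈ T (T (L m)) := hTmono _ _ (hTmono _ _ (hKL n m hnm)) hxn
    rcases mem_MOPsatur.1 hxm with ⟨b, hbne, hxb⟩
    have hb3 : closure (v b) ⊆ T (T (T (L m))) :=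
      closure_subset_MOPsatur ⟨x, hxb, hxLm⟩
    obtain ⟨z, hzb, hzT⟩ := hbne
    rcases mem_MOPsatur.1 hzT with ⟨a, hane, hza⟩
    have ha4 : closure (v a) ⊆ T (T (T (T (L m)))) :=
      closure_subset_MOPsatur ⟨z, hza, hb3 hzb⟩
    obtain ⟨w, hwa, hwK⟩ := hane
    exact (hKdisj m).ne_of_mem hwK (ha4 hwa) rfl
  intro n hn m hm
  simp only [mem_setOf_eq] at hn hm
  rcases Nat.lt_trichotomy n m with h | h | h
  · exact absurd (hlt n m h (hmemT2 n hn) (hmemT2 m hm)) not_false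
  · exact h
  · exact absurd (hlt m n h (hmemT2 m hm) (hmemT2 n hn)) not_false
end

section
/- If a topological space X has the Moving Off Property and Y is a closed subset of X, then the subspace Y also has the Moving Off Property. -/
open Set Topology

/-- The Moving Off Property is inherited by closed subspaces. -/
theorem mop_closed_subspace (X : Type*) [TopologicalSpace X] (hmop : HasMOP X)
    (Y : Set X) (hY : IsClosed Y) : HasMOP Y := by
  intro 𝒦 h𝒦
  obtain ⟨hne, hcpt, hmov⟩ := h𝒦
  set 𝒦' : Set (Set X) := (fun K => Subtype.val '' K) '' 𝒦 with h𝒦'def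
  have hmo' : IsMovingOff 𝒦' := by
    refine ⟨?_, ?_, ?_⟩
    · rintro K' ⟨K, hK, rfl⟩
      exact (hne K hK).image _
    · rintro K' ⟨K, hK, rfl⟩
      exact (hcpt K hK).image continuous_subtype_val
    · intro L hL
      have hpre : IsCompact (Subtype.val ⁻¹' L : Set Y) :=
        (hY.isClosedEmbedding_subtypeVal).isCompact_preimage hL
      obtain ⟨K, hK, hdisj⟩ := hmov _ hpre
      refine ⟨Subtype.val '' K, ⟨K, hK, rfl⟩, ?_⟩
      rw [Set.disjoint_left]
      rintro x ⟨y, hy, rfl⟩ hxL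
      exact Set.disjoint_left.mp hdisj hy hxL
  obtain ⟨K', hmem, hinj, U, hopen, hsub, hdisc⟩ := hmop 𝒦' hmo'
  choose K hKmem hKeq using hmem
  refine ⟨K, hKmem, ?_, fun n => Subtype.val ⁻¹' U n, fun n => (hopen n).preimage continuous_subtype_val, ?_, ?_⟩
  · intro a b hab
    apply hinj
    rw [← hKeq a, ← hKeq b, hab]
  · intro n y hy
    have : (y : X) ∈ K' n := by rw [← hKeq n]; exact ⟨y, hy, rfl⟩
    exact hsub n this
  · intro y
    obtain ⟨V, hV, hVsub⟩ := hdisc (y : X)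
    refine ⟨Subtype.val ⁻¹' V, continuous_subtype_val.continuousAt.preimage_mem_nhds hV, ?_⟩
    intro i hi j hj
    refine hVsub ?_ ?_
    · obtain ⟨z, hz1, hz2⟩ := hi; exact ⟨z, hz1, hz2⟩
    · obtain ⟨z, hz1, hz2⟩ := hj; exact ⟨z, hz1, hz2⟩
end

section
/- Let X be a locally compact, locally countable Hausdorff topological space with |X| ≥ 2^{ℵ₀}, and suppose that every closed subspace of X of cardinality at most 2^{ℵ₀} has the Moving Off Property. Then X has the Moving Off Property. -/
open Set Topology

/-- A space is *locally countable* if every point has a countable neighborhood. -/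
def LocallyCountable (X : Type*) [TopologicalSpace X] : Prop :=
  ∀ x : X, ∃ N ∈ nhds x, N.Countable

/-!
Given a moving off collection `𝒦`, close off along an `ω₁`-chain of sets of size at most `𝔠`:
stage `o` adds, for every countable `S` lying in an earlier stage, a countable open neighbourhood
of each point of `S`, the closure of `S` when it is countable, and a member of `𝒦` missing `S`
when `S` is compact. Since `ω₁` is regular, every countable subset of the union `Y` lies in one
stage, so `Y` is closed under these operations. Local countability makes compact sets countable
and puts every point of `closure Y` into the countable closure of a countable subset of `Y`, so `Y`
is clopen and `𝒦` restricts to a moving off collection on `Y`. A discrete open expansion found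
in `Y` is open in `X` because `Y` is open, and discrete in `X` because `Y` is closed.
-/

open Cardinal Ordinal

universe u

section CountableClosure

variable {X : Type u}

theorem mk_countable_subsets_le {s : Set X} {κ : Cardinal.{u}} (hℵ₀ : ℵ₀ ≤ κ)
    (hκ : κ ^ ℵ₀ = κ) (hs : #s ≤ κ) : #{S : Set X | S.Countable ∧ S ⊆ s} ≤ κ := by
  have e : {S : Set X | S.Countable ∧ S ⊆ s} ≃ {S : Set X // S ⊆ s ∧ #S ≤ ℵ₀} :=
    Equiv.subtypeEquivRight fun S => by rw [le_aleph0_iff_set_countable, and_comm]; rfl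
  calc #{S : Set X | S.Countable ∧ S ⊆ s} = #{S : Set X // S ⊆ s ∧ #S ≤ ℵ₀} := mk_congr e
    _ ≤ max #s ℵ₀ ^ ℵ₀ := mk_bounded_subset_le s ℵ₀
    _ ≤ κ ^ ℵ₀ := power_le_power_right (max_le hs hℵ₀)
    _ = κ := hκ

theorem mk_biUnion_le_of_forall_mk_le {ι : Type u} {s : Set ι} {A : ι → Set X}
    {κ : Cardinal.{u}} (hℵ₀ : ℵ₀ ≤ κ) (hs : #s ≤ κ) (hA : ∀ i ∈ s, #(A i) ≤ κ) :
    #(⋃ i ∈ s, A i) ≤ κ :=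
  calc #(⋃ i ∈ s, A i) ≤ #s * ⨆ i : s, #(A i) := mk_biUnion_le A s
    _ ≤ κ * κ := mul_le_mul' hs (ciSup_le' fun i => hA i i.2)
    _ = κ := mul_eq_self hℵ₀

variable (G : Set X → Set X)

noncomputable def countableClosureStage (o : Ordinal.{u}) : Set X :=
  ⋃ j < o, ⋃ S ∈ {S : Set X | S.Countable ∧ S ⊆ countableClosureStage j}, G S
termination_by o

theorem countableClosureStage_mono : Monotone (countableClosureStage G) := by
  intro o o' h
  rw [countableClosureStage, countableClosureStage]
  exact biUnion_subset_biUnion_left fun j hj => lt_of_lt_of_le hj h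

theorem apply_subset_countableClosureStage {j o : Ordinal.{u}} (hjo : j < o) {S : Set X}
    (hS : S.Countable) (hSj : S ⊆ countableClosureStage G j) :
    G S ⊆ countableClosureStage G o := by
  rw [countableClosureStage]
  exact subset_iUnion₂_of_subset j hjo (subset_iUnion₂_of_subset S ⟨hS, hSj⟩ subset_rfl)

theorem mk_countableClosureStage_le {κ : Cardinal.{u}} (hℵ₀ : ℵ₀ ≤ κ) (hκ : κ ^ ℵ₀ = κ)
    (hG : ∀ S : Set X, S.Countable → #(G S) ≤ κ) (o : Ordinal.{u}) (ho : o.card ≤ κ) :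
    #(countableClosureStage G o) ≤ κ := by
  induction o using WellFoundedLT.induction with
  | _ o ih =>
    rw [countableClosureStage]
    refine Cardinal.mk_biUnion_le_of_le ho hℵ₀ _ fun j hj => ?_
    have hj' : #(countableClosureStage G j) ≤ κ := ih j hj ((card_le_card hj.le).trans ho)
    exact mk_biUnion_le_of_forall_mk_le hℵ₀ (mk_countable_subsets_le hℵ₀ hκ hj')
      fun S hS => hG S hS.1

theorem exists_mk_le_forall_countable_subset_apply_subset {κ : Cardinal.{u}} (hℵ₁ : ℵ₁ ≤ κ)
    (hκ : κ ^ ℵ₀ = κ) (hG : ∀ S : Set X, S.Countable → #(G S) ≤ κ) :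
    ∃ Y : Set X, #Y ≤ κ ∧ ∀ S : Set X, S.Countable → S ⊆ Y → G S ⊆ Y := by
  have hℵ₀ : ℵ₀ ≤ κ := aleph0_lt_aleph_one.le.trans hℵ₁
  have hω₁ : Order.IsSuccLimit ω₁ := by
    simpa [ord_aleph] using isSuccLimit_ord (aleph0_le_aleph 1)
  refine ⟨⋃ j < ω₁, countableClosureStage G j, ?_, fun S hS hSY => ?_⟩
  · refine Cardinal.mk_biUnion_le_of_le (by simpa [← ord_aleph] using hℵ₁) hℵ₀ _ fun j hj => ?_
    refine mk_countableClosureStage_le G hℵ₀ hκ hG j (le_trans ?_ hℵ₀)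
    simpa [← ord_aleph, lt_ord, lt_aleph_one_iff] using hj
  · have hx : ∀ x : S, ∃ j < ω₁, x.1 ∈ countableClosureStage G j := by
      simpa using fun x (hx : x ∈ S) => hSY hx
    choose j hjω₁ hxj using hx
    have : Countable S := hS.to_subtype
    have hsup : ⨆ x, j x < ω₁ := iSup_lt_omega_one hjω₁
    have hSsup : S ⊆ countableClosureStage G (⨆ x, j x) := fun x hx =>
      countableClosureStage_mono G (le_ciSup Ordinal.bddAbove_of_small ⟨x, hx⟩) (hxj ⟨x, hx⟩)
    exact (apply_subset_countableClosureStage G (Order.lt_succ _) hS hSsup).trans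
      (subset_biUnion_of_mem (u := countableClosureStage G) (hω₁.succ_lt hsup))

end CountableClosure

namespace LocallyCountable

variable {X : Type u} [TopologicalSpace X]

theorem countable_of_isCompact (hX : LocallyCountable X) {L : Set X} (hL : IsCompact L) :
    L.Countable := by
  choose N hN hNc using hX
  obtain ⟨t, -, hLt⟩ := hL.elim_nhds_subcover N fun x _ => hN x
  exact (t.countable_toSet.biUnion fun x _ => hNc x).mono hLt

theorem exists_isOpen_countable (hX : LocallyCountable X) (x : X) :
    ∃ O : Set X, IsOpen O ∧ x ∈ O ∧ O.Countable := by
  obtain ⟨N, hN, hNc⟩ := hX x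
  exact ⟨interior N, isOpen_interior, mem_interior_iff_mem_nhds.2 hN, hNc.mono interior_subset⟩

theorem exists_countable_subset_mem_closure_countable_closure [T2Space X]
    [LocallyCompactSpace X] (hX : LocallyCountable X) {A : Set X} {x : X} (hx : x ∈ closure A) :
    ∃ S ⊆ A, S.Countable ∧ (closure S).Countable ∧ x ∈ closure S := by
  obtain ⟨N, hN, hNc⟩ := hX x
  obtain ⟨K, hK, hKN, hKc⟩ := local_compact_nhds hN
  have hclosure : closure (interior K ∩ A) ⊆ N :=
    (closure_mono (inter_subset_left.trans interior_subset)).trans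
      (hKc.isClosed.closure_eq.symm ▸ hKN)
  exact ⟨interior K ∩ A, inter_subset_right, hNc.mono (subset_closure.trans hclosure),
    hNc.mono hclosure, isOpen_interior.inter_closure ⟨mem_interior_iff_mem_nhds.2 hK, hx⟩⟩

theorem exists_isClopen_mk_le_continuum [T2Space X] [LocallyCompactSpace X]
    (hX : LocallyCountable X) (φ : (L : Set X) → IsCompact L → Set X)
    (hφ : ∀ L hL, (φ L hL).Countable) :
    ∃ Y : Set X, IsClopen Y ∧ #Y ≤ 𝔠 ∧ ∀ L (hL : IsCompact L), L ⊆ Y → φ L hL ⊆ Y := by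
  choose O hO hxO hOc using hX.exists_isOpen_countable
  let G : Set X → Set X := fun S =>
    (⋃ x ∈ S, O x) ∪ (⋃ _ : (closure S).Countable, closure S) ∪ ⋃ hS : IsCompact S, φ S hS
  have hG : ∀ S : Set X, S.Countable → (G S).Countable := fun S hS =>
    ((hS.biUnion fun x _ => hOc x).union (countable_iUnion id)).union
      (countable_iUnion fun hS => hφ S hS)
  obtain ⟨Y, hYc, hY⟩ := exists_mk_le_forall_countable_subset_apply_subset G
    aleph_one_le_continuum continuum_power_aleph0
    fun S hS => (hG S hS).le_aleph0.trans aleph0_le_continuum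
  refine ⟨Y, ⟨?_, ?_⟩, hYc, fun L hL hLY => ?_⟩
  · refine isClosed_of_closure_subset fun x hx => ?_
    obtain ⟨S, hSY, hS, hSc, hxS⟩ :=
      hX.exists_countable_subset_mem_closure_countable_closure hx
    exact hY S hS hSY (Or.inl (Or.inr (mem_iUnion.2 ⟨hSc, hxS⟩)))
  · refine isOpen_iff_forall_mem_open.2 fun x hx => ⟨O x, ?_, hO x, hxO x⟩
    exact fun y hy => hY {x} (countable_singleton x) (singleton_subset_iff.2 hx)
      (Or.inl (Or.inl (mem_biUnion (mem_singleton x) hy)))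
  · exact fun y hy => hY L (hX.countable_of_isCompact hL) hLY
      (Or.inr (mem_iUnion.2 ⟨hL, hy⟩))

end LocallyCountable

section Subspace

variable {X : Type*} [TopologicalSpace X] {Y : Set X}

theorem IsMovingOff.restrict {𝒦 : Set (Set X)} (h𝒦 : IsMovingOff 𝒦)
    (hY : ∀ L, IsCompact L → L ⊆ Y → ∃ K ∈ 𝒦, K ⊆ Y ∧ Disjoint K L) :
    IsMovingOff {K : Set Y | (↑) '' K ∈ 𝒦} := by
  refine ⟨fun K hK => image_nonempty.1 (h𝒦.1 _ hK),
    fun K hK => IsEmbedding.subtypeVal.isCompact_iff.2 (h𝒦.2.1 _ hK), fun L hL => ?_⟩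
  obtain ⟨K, hK, hKY, hKL⟩ := hY _ (hL.image continuous_subtype_val)
    (Subtype.coe_image_subset Y L)
  refine ⟨(↑) ⁻¹' K, ?_, ?_⟩
  · show (↑) '' ((↑) ⁻¹' K : Set Y) ∈ 𝒦
    rwa [image_preimage_eq_of_subset (Subtype.range_coe.symm ▸ hKY)]
  · exact (hKL.preimage _).mono_right (subset_preimage_image _ _)

theorem IsDiscreteFamily.image_val {ι : Type*} (hY : IsClosed Y) {U : ι → Set Y}
    (hU : IsDiscreteFamily U) : IsDiscreteFamily fun i => ((↑) '' U i : Set X) := by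
  intro x
  by_cases hx : x ∈ Y
  · obtain ⟨V, hV, hUV⟩ := hU ⟨x, hx⟩
    obtain ⟨W, hW, hWV⟩ := (mem_nhds_subtype Y ⟨x, hx⟩ V).1 hV
    have hmeet : ∀ i, ((↑) '' U i ∩ W).Nonempty → (U i ∩ V).Nonempty := by
      rintro i ⟨_, ⟨y, hy, rfl⟩, hyW⟩
      exact ⟨y, hy, hWV hyW⟩
    exact ⟨W, hW, fun i hi j hj => hUV (hmeet i hi) (hmeet j hj)⟩
  · refine ⟨Yᶜ, hY.isOpen_compl.mem_nhds hx, fun i hi => ?_⟩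
    obtain ⟨_, ⟨y, -, rfl⟩, hyY⟩ := hi
    exact absurd y.2 hyY

end Subspace

theorem mop_of_small_closed_subspaces_general (X : Type*) [TopologicalSpace X] [T2Space X]
    [LocallyCompactSpace X] (hlc : LocallyCountable X)
    (h : ∀ Y : Set X, IsClosed Y → Cardinal.mk Y ≤ Cardinal.continuum → HasMOP Y) :
    HasMOP X := by
  intro 𝒦 h𝒦
  choose k hk𝒦 hkL using h𝒦.2.2
  obtain ⟨Y, hY, hYc, hYk⟩ := hlc.exists_isClopen_mk_le_continuum k
    fun L hL => hlc.countable_of_isCompact (h𝒦.2.1 _ (hk𝒦 L hL))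
  obtain ⟨K, hK, hKinj, U, hUo, hKU, hU⟩ := h Y hY.isClosed hYc _
    (h𝒦.restrict fun L hL hLY => ⟨k L hL, hk𝒦 L hL, hYk L hL hLY, hkL L hL⟩)
  exact ⟨fun n => Subtype.val '' K n, hK,
    (image_injective.2 Subtype.val_injective).comp hKinj, fun n => Subtype.val '' U n,
    fun n => hY.isOpen.isOpenMap_subtype_val _ (hUo n),
    fun n => image_mono (hKU n), hU.image_val hY.isClosed⟩

/-- Theorem 14: if `X` is locally compact, locally countable, Hausdorff, of cardinality at least
the continuum, and every closed subspace of cardinality at most the continuum has the MOP,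
then `X` has the MOP. -/
theorem mop_of_small_closed_subspaces (X : Type*) [TopologicalSpace X] [T2Space X]
    [LocallyCompactSpace X] (hlc : LocallyCountable X)
    (hcard : Cardinal.continuum ≤ Cardinal.mk X)
    (h : ∀ Y : Set X, IsClosed Y → Cardinal.mk Y ≤ Cardinal.continuum → HasMOP Y) :
    HasMOP X :=
  mop_of_small_closed_subspaces_general X hlc h
end

section
/- Let X be a topological space such that the countable power X^ℕ (with the product topology) is a Baire space. Then for every infinite index type ι, the power X^ι (with the product topology) is a Baire space. -/
open Set Topology

/-!
Fix dense open sets `U n` of `X^ι` and a nonempty open `W`. A node is an open set of `X^ℕ` (its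
box) depending on finitely many coordinates, together with a finite partial injection `ℕ ⇀ ι`
along which it is read as an open set of `X^ι` (its cylinder). A node can be refined so that its
box lies in any open set meeting it (this is where `ι` infinite is used) and its cylinder in any
dense open set. By Zorn, below every node there is a family of such refinements with cylinders in
`U n` whose boxes are pairwise disjoint and dense in the parent box. Iterating from a node with
cylinder in `W` gives a tree all of whose levels are dense in the root box, so the Baire property
of `X^ℕ` gives a point `y` in a box of every level; by disjointness these boxes form a branch, and
reading `y` back along the union of the branch's partial injections gives a point of
`W ∩ ⋂ n, U n`.
-/

theorem exists_le_forall_mem_of_finite {α β : Type*} [Preorder α] {P : β → α → Prop}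
    (hP : ∀ b, Antitone (P b)) (hstep : ∀ b a, ∃ a' ≤ a, P b a') {s : Set β}
    (hs : s.Finite) (a : α) : ∃ a' ≤ a, ∀ b ∈ s, P b a' := by
  induction s, hs using Set.Finite.induction_on generalizing a with
  | empty => exact ⟨a, le_rfl, fun _ => False.elim⟩
  | @insert b s _ _ ih =>
    obtain ⟨a₁, ha₁, hb⟩ := hstep b a
    obtain ⟨a₂, ha₂, hs⟩ := ih a₁
    exact ⟨a₂, ha₂.trans ha₁, forall_mem_insert.2 ⟨hP b ha₂ hb, hs⟩⟩

section Topology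

variable {Y α : Type*} [TopologicalSpace Y]

theorem exists_pairwiseDisjoint_subset_closure_biUnion {V : Set Y} {C : Set α} {box : α → Set Y}
    (hC : ∀ r, IsOpen r → (V ∩ r).Nonempty → ∃ a ∈ C, (box a).Nonempty ∧ box a ⊆ r) :
    ∃ A ⊆ C, A.PairwiseDisjoint box ∧ V ⊆ closure (⋃ a ∈ A, box a) := by
  obtain ⟨A, hA⟩ := zorn_subset {A | A ⊆ C ∧ A.PairwiseDisjoint box} fun c hc hchain =>
    ⟨⋃₀ c, ⟨sUnion_subset fun A hA => (hc hA).1,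
      (hchain.pairwiseDisjoint_sUnion box).2 fun A hA => (hc hA).2⟩,
      fun _ => subset_sUnion_of_mem⟩
  refine ⟨A, hA.prop.1, hA.prop.2, fun z hz => by_contra fun hzA => ?_⟩
  obtain ⟨a, haC, ⟨w, hw⟩, har⟩ := hC _ isClosed_closure.isOpen_compl ⟨z, hz, hzA⟩
  have hdisj : ∀ b ∈ A, Disjoint (box a) (box b) := fun b hb =>
    disjoint_compl_left.mono har ((subset_biUnion_of_mem hb).trans subset_closure)
  have haA : a ∉ A := fun ha => (hdisj a ha).ne_of_mem hw hw rfl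
  exact haA (hA.mem_of_prop_insert ⟨insert_subset haC hA.prop.1, hA.prop.2.insert
    fun b hb _ => hdisj b hb⟩)

theorem nonempty_inter_iInter_of_subset_closure [BaireSpace Y] {V : Set Y} (hV : IsOpen V)
    (hne : V.Nonempty) {G : ℕ → Set Y} (hG : ∀ n, IsOpen (G n))
    (hVG : ∀ n, V ⊆ closure (G n)) : (V ∩ ⋂ n, G n).Nonempty := by
  have hdense (n : ℕ) : Dense (G n ∪ (closure V)ᶜ) := fun z => by
    by_cases hz : z ∈ closure V
    · exact closure_mono subset_union_left (closure_minimal (hVG n) isClosed_closure hz)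
    · exact subset_closure (Or.inr hz)
  obtain ⟨y, hyV, hy⟩ := (dense_iInter_of_isOpen_nat
    (fun n => (hG n).union isClosed_closure.isOpen_compl) hdense).inter_open_nonempty V hV hne
  exact ⟨y, hyV, mem_iInter.2 fun n =>
    (mem_iInter.1 hy n).resolve_right (not_not.2 (subset_closure hyV))⟩

theorem exists_branch_of_baireSpace [BaireSpace Y] {box : α → Set Y}
    (hbox : ∀ a, IsOpen (box a)) {child : ℕ → α → Set α}
    (hsub : ∀ n a, ∀ b ∈ child n a, box b ⊆ box a)
    (hdisj : ∀ n a, (child n a).PairwiseDisjoint box)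
    (hdense : ∀ n a, box a ⊆ closure (⋃ b ∈ child n a, box b)) {a₀ : α}
    (h₀ : (box a₀).Nonempty) :
    ∃ y, ∃ c : ℕ → α, c 0 = a₀ ∧ ∀ n, c (n + 1) ∈ child n (c n) ∧ y ∈ box (c n) := by
  let level (n : ℕ) : Set α := Nat.rec {a₀} (fun n L => ⋃ a ∈ L, child n a) n
  have hdisj_level (n : ℕ) : (level n).PairwiseDisjoint box := by
    induction n with
    | zero => exact pairwiseDisjoint_singleton _ _
    | succ n ih =>
      exact (ih.mono fun a => iUnion₂_subset (hsub n a)).biUnion fun a _ => hdisj n a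
  have hdense_level (n : ℕ) : box a₀ ⊆ closure (⋃ a ∈ level n, box a) := by
    induction n with
    | zero => simpa [level] using subset_closure
    | succ n ih =>
      refine ih.trans (closure_minimal (iUnion₂_subset fun a ha => (hdense n a).trans
        (closure_mono ?_)) isClosed_closure)
      exact biUnion_subset_biUnion_left (subset_biUnion_of_mem (u := fun a => child n a) ha)
  obtain ⟨y, -, hy⟩ := nonempty_inter_iInter_of_subset_closure (hbox a₀) h₀
    (fun n => isOpen_biUnion fun a _ => hbox a) hdense_level
  choose c hc hyc using fun n => mem_iUnion₂.1 (mem_iInter.1 hy n)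
  refine ⟨y, c, hc 0, fun n => ⟨?_, hyc n⟩⟩
  -- the parent of `c (n + 1)` contains `y`, so by disjointness of level `n` it is `c n`
  obtain ⟨a, ha, hca⟩ := mem_iUnion₂.1 (hc (n + 1))
  rwa [(hdisj_level n).elim_set (hc n) ha y (hyc n) (hsub n a _ hca (hyc (n + 1)))]

end Topology

namespace BairePower

structure PartialInj (ι : Type*) where
  dom : Set ℕ
  label : ℕ → ι
  finite_dom : dom.Finite
  injOn_label : InjOn label dom

namespace PartialInj

variable {ι : Type*}

instance : Preorder (PartialInj ι) where
  le p q := q.dom ⊆ p.dom ∧ EqOn p.label q.label q.dom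
  le_refl _ := ⟨subset_rfl, eqOn_refl _ _⟩
  le_trans _ _ _ hpq hqr :=
    ⟨hqr.1.trans hpq.1, fun _ hm => (hpq.2 (hqr.1 hm)).trans (hqr.2 hm)⟩

theorem dom_subset_of_le {p q : PartialInj ι} (h : p ≤ q) : q.dom ⊆ p.dom := h.1

theorem eq_of_label_eq {p q₁ q₂ : PartialInj ι} (h₁ : p ≤ q₁) (h₂ : p ≤ q₂) {m₁ m₂ : ℕ}
    (hm₁ : m₁ ∈ q₁.dom) (hm₂ : m₂ ∈ q₂.dom) (h : q₁.label m₁ = q₂.label m₂) : m₁ = m₂ :=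
  p.injOn_label (h₁.1 hm₁) (h₂.1 hm₂) (by rw [h₁.2 hm₁, h₂.2 hm₂, h])

theorem label_image_subset {p q : PartialInj ι} (h : p ≤ q) :
    q.label '' q.dom ⊆ p.label '' p.dom := by
  rw [← h.2.image_eq]
  exact image_mono h.1

theorem exists_le_label_eq (p : PartialInj ι) {m : ℕ} {i : ι} (hm : m ∉ p.dom)
    (hi : i ∉ p.label '' p.dom) : ∃ q ≤ p, m ∈ q.dom ∧ q.label m = i := by
  classical
  have heq : EqOn (Function.update p.label m i) p.label p.dom := fun k hk =>
    Function.update_of_ne (ne_of_mem_of_not_mem hk hm) _ _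
  refine ⟨⟨insert m p.dom, Function.update p.label m i, p.finite_dom.insert m,
    (injOn_insert hm).2 ⟨p.injOn_label.congr heq.symm, ?_⟩⟩, ⟨subset_insert _ _, heq⟩,
    mem_insert _ _, Function.update_self _ _ _⟩
  rwa [heq.image_eq, Function.update_self]

theorem exists_le_mem_dom [Infinite ι] (p : PartialInj ι) (m : ℕ) : ∃ q ≤ p, m ∈ q.dom := by
  by_cases hm : m ∈ p.dom
  · exact ⟨p, le_rfl, hm⟩
  obtain ⟨i, hi⟩ := (p.finite_dom.image p.label).exists_notMem
  obtain ⟨q, hq, hmq, -⟩ := p.exists_le_label_eq hm hi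
  exact ⟨q, hq, hmq⟩

theorem exists_le_mem_label_image (p : PartialInj ι) (i : ι) :
    ∃ q ≤ p, i ∈ q.label '' q.dom := by
  by_cases hi : i ∈ p.label '' p.dom
  · exact ⟨p, le_rfl, hi⟩
  obtain ⟨m, hm⟩ := p.finite_dom.exists_notMem
  obtain ⟨q, hq, hmq, hqi⟩ := p.exists_le_label_eq hm hi
  exact ⟨q, hq, m, hmq, hqi⟩

theorem exists_le_subset_dom [Infinite ι] (p : PartialInj ι) {G : Set ℕ} (hG : G.Finite) :
    ∃ q ≤ p, G ⊆ q.dom :=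
  exists_le_forall_mem_of_finite (P := fun m (q : PartialInj ι) => m ∈ q.dom)
    (fun _ _ _ h hm => dom_subset_of_le h hm) (fun m q => q.exists_le_mem_dom m) hG p

theorem exists_le_subset_label_image (p : PartialInj ι) {I : Set ι} (hI : I.Finite) :
    ∃ q ≤ p, I ⊆ q.label '' q.dom :=
  exists_le_forall_mem_of_finite (P := fun i (q : PartialInj ι) => i ∈ q.label '' q.dom)
    (fun _ _ _ h hi => label_image_subset h hi) (fun i q => q.exists_le_mem_label_image i) hI p

end PartialInj

structure Node (ι X : Type*) [TopologicalSpace X] extends PartialInj ι where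
  box : Set (ℕ → X)
  isOpen_box : IsOpen box
  nonempty_box : box.Nonempty
  dependsOn_box : DependsOn (· ∈ box) dom

namespace Node

variable {ι X : Type*} [TopologicalSpace X]

instance : Preorder (Node ι X) where
  le μ ν := μ.toPartialInj ≤ ν.toPartialInj ∧ μ.box ⊆ ν.box
  le_refl _ := ⟨le_rfl, subset_rfl⟩
  le_trans _ _ _ h h' := ⟨h.1.trans h'.1, h.2.trans h'.2⟩

theorem box_mono : Monotone (box : Node ι X → Set (ℕ → X)) := fun _ _ h => h.2

def cyl (ν : Node ι X) : Set (ι → X) := (· ∘ ν.label) ⁻¹' ν.box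

theorem mem_box_of_eqOn (ν : Node ι X) {y z : ℕ → X} (hy : y ∈ ν.box)
    (h : EqOn z y ν.dom) : z ∈ ν.box :=
  (ν.dependsOn_box fun _ hm => (h hm).symm).mp hy

theorem isOpen_cyl (ν : Node ι X) : IsOpen ν.cyl :=
  ν.isOpen_box.preimage (continuous_pi fun m => continuous_apply (ν.label m))

theorem exists_mem_cyl_of_antitone {ν : ℕ → Node ι X} (hν : Antitone ν) {y : ℕ → X}
    (hy : ∀ n, y ∈ (ν n).box) : ∃ x : ι → X, ∀ n, x ∈ (ν n).cyl := by
  -- the labellings along the chain are compatible, so `source` inverts each of them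
  let source (i : ι) : ℕ :=
    Classical.epsilon fun m => ∃ n, m ∈ (ν n).dom ∧ (ν n).label m = i
  have hsource (n : ℕ) : ∀ m ∈ (ν n).dom, source ((ν n).label m) = m := fun m hm => by
    obtain ⟨k, hk, hlabel⟩ := Classical.epsilon_spec
      (p := fun m' => ∃ k, m' ∈ (ν k).dom ∧ (ν k).label m' = (ν n).label m) ⟨m, n, hm, rfl⟩
    exact PartialInj.eq_of_label_eq (hν (le_max_right n k)).1 (hν (le_max_left n k)).1 hk hm
      hlabel
  exact ⟨y ∘ source, fun n =>
    (ν n).mem_box_of_eqOn (hy n) fun m hm => congrArg y (hsource n m hm)⟩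

theorem nonempty_cyl (ν : Node ι X) : ν.cyl.Nonempty :=
  let ⟨_, hy⟩ := ν.nonempty_box
  let ⟨x, hx⟩ := exists_mem_cyl_of_antitone (ν := fun _ => ν) antitone_const fun _ => hy
  ⟨x, hx 0⟩

def shrink (ν : Node ι X) (p : PartialInj ι) (hp : p ≤ ν.toPartialInj) {S : Set ℕ}
    (hS : S ⊆ p.dom) {w : ℕ → Set X} (hw : ∀ m ∈ S, IsOpen (w m))
    (hne : (ν.box ∩ S.pi w).Nonempty) : Node ι X where
  toPartialInj := p
  box := ν.box ∩ S.pi w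
  isOpen_box := ν.isOpen_box.inter (isOpen_set_pi (p.finite_dom.subset hS) hw)
  nonempty_box := hne
  dependsOn_box _ _ h := congrArg₂ And (ν.dependsOn_box.mono hp.1 h)
    (propext (forall₂_congr fun m hm => by rw [h m (hS hm)]))

theorem shrink_le (ν : Node ι X) (p : PartialInj ι) (hp : p ≤ ν.toPartialInj) {S : Set ℕ}
    (hS : S ⊆ p.dom) {w : ℕ → Set X} (hw : ∀ m ∈ S, IsOpen (w m))
    (hne : (ν.box ∩ S.pi w).Nonempty) : ν.shrink p hp hS hw hne ≤ ν :=
  ⟨hp, inter_subset_left⟩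

theorem exists_le_box_subset [Infinite ι] (ν : Node ι X) {r : Set (ℕ → X)} (hr : IsOpen r)
    (hne : (ν.box ∩ r).Nonempty) : ∃ μ ≤ ν, μ.box ⊆ r := by
  obtain ⟨y, hyν, hyr⟩ := hne
  obtain ⟨G, w, hw, hGw⟩ := isOpen_pi_iff.1 hr y hyr
  obtain ⟨p, hp, hGp⟩ := ν.exists_le_subset_dom G.finite_toSet
  exact ⟨ν.shrink p hp hGp (fun m hm => (hw m hm).1) ⟨y, hyν, fun m hm => (hw m hm).2⟩,
    ν.shrink_le .., inter_subset_right.trans hGw⟩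

theorem exists_le_cyl_subset (ν : Node ι X) {U : Set (ι → X)} (hU : IsOpen U)
    (hne : (ν.cyl ∩ U).Nonempty) : ∃ μ ≤ ν, μ.cyl ⊆ U := by
  obtain ⟨x, hxν, hxU⟩ := hne
  obtain ⟨I, u, hu, hIu⟩ := isOpen_pi_iff.1 hU x hxU
  obtain ⟨p, hp, hIp⟩ := ν.exists_le_subset_label_image I.finite_toSet
  have hx : x ∘ p.label ∈ ν.box ∩ {m ∈ p.dom | p.label m ∈ I}.pi (u ∘ p.label) :=
    ⟨ν.mem_box_of_eqOn hxν fun m hm => congrArg x (hp.2 hm), fun m hm => (hu _ hm.2).2⟩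
  refine ⟨ν.shrink p hp (sep_subset _ _) (fun m hm => (hu _ hm.2).1) ⟨_, hx⟩,
    ν.shrink_le .., fun z hz => hIu fun i hi => ?_⟩
  obtain ⟨m, hm, rfl⟩ := hIp hi
  exact hz.2 m ⟨hm, hi⟩

theorem exists_le_cyl_subset_box_subset [Infinite ι] (ν : Node ι X) {U : Set (ι → X)}
    (hU : IsOpen U) (hUd : Dense U) {r : Set (ℕ → X)} (hr : IsOpen r)
    (hne : (ν.box ∩ r).Nonempty) : ∃ μ ≤ ν, μ.cyl ⊆ U ∧ μ.box ⊆ r := by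
  obtain ⟨μ₁, hμ₁, hμ₁r⟩ := ν.exists_le_box_subset hr hne
  obtain ⟨μ, hμ, hμU⟩ :=
    μ₁.exists_le_cyl_subset hU (hUd.inter_open_nonempty _ μ₁.isOpen_cyl μ₁.nonempty_cyl)
  exact ⟨μ, hμ.trans hμ₁, hμU, (box_mono hμ).trans hμ₁r⟩

theorem exists_pairwiseDisjoint_refinements [Infinite ι] (ν : Node ι X) {U : Set (ι → X)}
    (hU : IsOpen U) (hUd : Dense U) : ∃ A : Set (Node ι X), (∀ μ ∈ A, μ ≤ ν ∧ μ.cyl ⊆ U) ∧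
      A.PairwiseDisjoint box ∧ ν.box ⊆ closure (⋃ μ ∈ A, μ.box) :=
  exists_pairwiseDisjoint_subset_closure_biUnion fun _ hr hne =>
    let ⟨μ, hμ, hμU, hμr⟩ := ν.exists_le_cyl_subset_box_subset hU hUd hr hne
    ⟨μ, ⟨hμ, hμU⟩, μ.nonempty_box, hμr⟩

theorem exists_cyl_subset [Nonempty ι] {W : Set (ι → X)} (hW : IsOpen W) (hne : W.Nonempty) :
    ∃ ν : Node ι X, ν.cyl ⊆ W := by
  obtain ⟨x, hx⟩ := hne
  let root : Node ι X :=
    { dom := ∅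
      label := fun _ => Classical.arbitrary ι
      finite_dom := finite_empty
      injOn_label := injOn_empty _
      box := univ
      isOpen_box := isOpen_univ
      nonempty_box := ⟨fun _ => x (Classical.arbitrary ι), trivial⟩
      dependsOn_box := fun _ _ _ => rfl }
  obtain ⟨ν, -, hν⟩ := root.exists_le_cyl_subset hW ⟨x, trivial, hx⟩
  exact ⟨ν, hν⟩

end Node

end BairePower

open BairePower

/-- Fleissner--Kunen: if `X^ω` is Baire then every infinite power of `X` is Baire. -/
theorem baire_power_of_baire_countable_power (X : Type*) [TopologicalSpace X]
    (h : BaireSpace (ℕ → X)) (ι : Type*) [Infinite ι] : BaireSpace (ι → X) := by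
  refine ⟨fun U hUo hUd => dense_iff_inter_open.2 fun W hWo hWne => ?_⟩
  obtain ⟨ν₀, hν₀W⟩ := Node.exists_cyl_subset hWo hWne
  choose child hchild hdisj hdense using fun n (ν : Node ι X) =>
    ν.exists_pairwiseDisjoint_refinements (hUo n) (hUd n)
  obtain ⟨y, ν, rfl, hν⟩ := exists_branch_of_baireSpace (fun ν => ν.isOpen_box)
    (fun n ν μ hμ => Node.box_mono (hchild n ν μ hμ).1) hdisj hdense ν₀.nonempty_box
  obtain ⟨x, hx⟩ := Node.exists_mem_cyl_of_antitone
    (antitone_nat_of_succ_le fun n => (hchild _ _ _ (hν n).1).1) fun n => (hν n).2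
  exact ⟨x, hν₀W (hx 0), mem_iInter.2 fun n => (hchild _ _ _ (hν n).1).2 (hx (n + 1))⟩
end

section
/- Let (X_i)_{i ∈ ι} be an arbitrary family of topological spaces, each of which is a Baire space and has a countable base (is second countable). Then the product Π_{i ∈ ι} X_i with the Tychonoff product topology is a Baire space. -/
/-!
For countably many coordinates, a point of a nonempty open set lying in all the dense open sets
`G k` is built one coordinate at a time, as in the Banach–Mazur game. Once the coordinates of
index `< n` are frozen, every `G k` still has a dense slice; the box constraining the free
coordinates is shrunk into the slice of `G n`, and the `n`-th coordinate is then chosen in the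
box and in the comeagre set of values for which all slices stay dense. That set is comeagre by a
Kuratowski–Ulam argument, which only needs the product to be second countable.

For an arbitrary index set, a closure argument shows that every dense open set contains a dense
open set depending on countably many coordinates only, and the restriction map onto that
countable subproduct, an open quotient map, transfers the Baire property.
-/

open Set Topology Filter Function TopologicalSpace

section

variable {ι : Type*} {X : ι → Type*} [∀ i, TopologicalSpace (X i)]

structure IsOpenBox (C : ∀ i, Set (X i)) : Prop where
  isOpen : ∀ i, IsOpen (C i)
  nonempty : ∀ i, (C i).Nonempty
  finite_ne_univ : {i | C i ≠ univ}.Finite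

namespace IsOpenBox

variable {C : ∀ i, Set (X i)}

theorem isOpen_pi (hC : IsOpenBox C) : IsOpen (univ.pi C) := by
  have : univ.pi C = {i | C i ≠ univ}.pi C := by
    ext x
    simp only [Set.mem_pi, mem_univ, true_imp_iff, mem_ofPred_eq]
    refine ⟨fun hx i _ => hx i, fun hx i => ?_⟩
    by_cases hi : C i = univ
    · simp [hi]
    · exact hx i hi
  rw [this]
  exact isOpen_set_pi hC.finite_ne_univ fun i _ => hC.isOpen i

theorem nonempty_pi (hC : IsOpenBox C) : (univ.pi C).Nonempty :=
  univ_pi_nonempty_iff.2 hC.nonempty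

theorem inf {C' : ∀ i, Set (X i)} (hC : IsOpenBox C) (hC' : IsOpenBox C')
    (hne : ∀ i, (C i ∩ C' i).Nonempty) : IsOpenBox (C ⊓ C') where
  isOpen i := (hC.isOpen i).inter (hC'.isOpen i)
  nonempty := hne
  finite_ne_univ := (hC.finite_ne_univ.union hC'.finite_ne_univ).subset fun i hi => by
    by_contra h
    simp only [mem_union, mem_ofPred_eq, not_or, not_not] at h
    exact hi (by simp [h.1, h.2])

end IsOpenBox

theorem exists_isOpenBox_mem_subset {W : Set (∀ i, X i)} (hW : IsOpen W) {x : ∀ i, X i}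
    (hx : x ∈ W) : ∃ C, IsOpenBox C ∧ x ∈ univ.pi C ∧ univ.pi C ⊆ W := by
  classical
  obtain ⟨I, u, hu, hIW⟩ := isOpen_pi_iff.1 hW x hx
  have hxu : ∀ i ∈ I, x i ∈ u i := fun i hi => (hu i hi).2
  refine ⟨fun i => if i ∈ I then u i else univ, ⟨fun i => ?_, fun i => ⟨x i, ?_⟩, ?_⟩,
    fun i _ => ?_, fun y hy => hIW fun i hi => by simpa [Finset.mem_coe.1 hi] using hy i trivial⟩
  · split_ifs with hi
    exacts [(hu i hi).1, isOpen_univ]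
  · split_ifs with hi
    exacts [hxu i hi, trivial]
  · exact I.finite_toSet.subset fun i hi => by_contra fun h => hi (if_neg h)
  · dsimp only
    split_ifs with hi
    exacts [hxu i hi, trivial]

theorem IsOpenBox.exists_le_pi_subset {C : ∀ i, Set (X i)} (hC : IsOpenBox C)
    {D : Set (∀ i, X i)} (hDo : IsOpen D) (hDd : Dense D) :
    ∃ C', IsOpenBox C' ∧ C' ≤ C ∧ univ.pi C' ⊆ D := by
  obtain ⟨x, hxC, hxD⟩ := hDd.inter_open_nonempty _ hC.isOpen_pi hC.nonempty_pi
  obtain ⟨C', hC', hxC', hC'sub⟩ :=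
    exists_isOpenBox_mem_subset (hC.isOpen_pi.inter hDo) ⟨hxC, hxD⟩
  exact ⟨C' ⊓ C, hC'.inf hC fun i => ⟨x i, hxC' i trivial, hxC i trivial⟩, inf_le_right,
    fun z hz => (hC'sub fun i _ => (hz i trivial).1).2⟩

omit [∀ i, TopologicalSpace (X i)] in
theorem dependsOn_mem_univ_pi (C : ∀ i, Set (X i)) :
    DependsOn (· ∈ univ.pi C) {i | C i ≠ univ} := by
  intro x y hxy
  simp only [mem_univ_pi, eq_iff_iff]
  refine forall_congr' fun i => ?_
  by_cases hi : C i = univ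
  · simp [hi]
  · rw [hxy i hi]

omit [∀ i, TopologicalSpace (X i)] in
theorem dependsOn_mem_biUnion {κ : Type*} {T : Set κ} {V : κ → Set (∀ i, X i)} {S : Set ι}
    (hV : ∀ s ∈ T, DependsOn (· ∈ V s) S) : DependsOn (· ∈ ⋃ s ∈ T, V s) S := by
  intro x y hxy
  simp only [mem_iUnion, exists_prop, eq_iff_iff]
  exact exists_congr fun s => and_congr_right fun hs => (hV s hs hxy).to_iff

theorem exists_open_finite_dependsOn_subset {U : Set (∀ i, X i)} (hU : IsOpen U) :
    ∃ V ⊆ U, IsOpen V ∧ (U.Nonempty → V.Nonempty) ∧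
      ∃ I : Set ι, I.Finite ∧ DependsOn (· ∈ V) I := by
  rcases U.eq_empty_or_nonempty with rfl | ⟨x, hx⟩
  · exact ⟨∅, subset_rfl, isOpen_empty, id, ∅, finite_empty, fun _ _ _ => rfl⟩
  · obtain ⟨C, hC, hxC, hCU⟩ := exists_isOpenBox_mem_subset hU hx
    exact ⟨_, hCU, hC.isOpen_pi, fun _ => ⟨x, hxC⟩, _, hC.finite_ne_univ,
      dependsOn_mem_univ_pi C⟩

-- Kuratowski–Ulam for a dense open set: density of a slice is tested on a countable basis.
theorem eventually_residual_dense_update_mem [DecidableEq ι]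
    [SecondCountableTopology (∀ i, X i)] {D : Set (∀ i, X i)} (hDo : IsOpen D) (hDd : Dense D)
    (i : ι) : ∀ᶠ x in residual (X i), Dense {z | update z i x ∈ D} := by
  have hV : ∀ V ∈ countableBasis (∀ i, X i),
      ∀ᶠ x in residual (X i), V.Nonempty → ∃ z ∈ V, update z i x ∈ D := by
    intro V _
    rcases V.eq_empty_or_nonempty with rfl | ⟨z₀, hz₀⟩
    · exact Eventually.of_forall fun _ h => absurd h not_nonempty_empty
    suffices {x | ∃ z ∈ V, update z i x ∈ D} ∈ residual (X i) by
      filter_upwards [this] with x hx using fun _ => hx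
    refine residual_of_dense_open ?_ ?_
    · have : {x | ∃ z ∈ V, update z i x ∈ D} = ⋃ z ∈ V, update z i ⁻¹' D := by ext; simp
      rw [this]
      exact isOpen_biUnion fun z _ => hDo.preimage (continuous_const.update i continuous_id)
    · rw [dense_iff_inter_open]
      rintro O hO ⟨x₀, hx₀⟩
      have hW : IsOpen {w : ∀ i, X i | w i ∈ O ∧ update w i (z₀ i) ∈ V} :=
        ((continuous_apply i).isOpen_preimage O hO).inter
          ((isOpen_of_mem_countableBasis ‹_›).preimage (continuous_id.update i continuous_const))
      obtain ⟨w, ⟨hwO, hwV⟩, hwD⟩ :=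
        hDd.inter_open_nonempty _ hW ⟨update z₀ i x₀, by simpa using ⟨hx₀, hz₀⟩⟩
      exact ⟨w i, hwO, update w i (z₀ i), hwV, by simpa using hwD⟩
  filter_upwards [(eventually_countable_ball (countable_countableBasis _)).2 hV] with x hx
  exact (isBasis_countableBasis _).dense_iff.2 fun V hV hne => hx V hV hne

omit [∀ i, TopologicalSpace (X i)] in
theorem Set.piecewise_insert_update [DecidableEq ι] {F : Set ι} {i : ι}
    [DecidablePred (· ∈ F)] [DecidablePred (· ∈ insert i F)] (hi : i ∉ F) (p z : ∀ i, X i)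
    (x : X i) :
    (insert i F).piecewise (update p i x) z = F.piecewise p (update z i x) := by
  ext j
  rcases eq_or_ne j i with rfl | hj
  · simp [hi]
  · by_cases hjF : j ∈ F <;> simp [hj, hjF]

theorem Set.continuous_piecewise_right (F : Set ι) [DecidablePred (· ∈ F)] (p : ∀ i, X i) :
    Continuous fun z => F.piecewise p z :=
  continuous_pi fun j => by
    by_cases hj : j ∈ F <;> simp [Set.piecewise, hj, continuous_apply, continuous_const]

-- `F.piecewise p z` freezes the coordinates in `F` at `p` and takes the others from `z`.
def DenseSlices (G : ℕ → Set (∀ i, X i)) (F : Set ι) [DecidablePred (· ∈ F)] (p : ∀ i, X i) :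
    Prop :=
  ∀ k, Dense {z | F.piecewise p z ∈ G k}

theorem DenseSlices.exists_update [DecidableEq ι] [SecondCountableTopology (∀ i, X i)] {i : ι}
    [BaireSpace (X i)] {G : ℕ → Set (∀ i, X i)} (hGo : ∀ k, IsOpen (G k)) {F : Set ι}
    [DecidablePred (· ∈ F)] {p : ∀ i, X i} (hp : DenseSlices G F p) (hi : i ∉ F)
    {O : Set (X i)} (hO : IsOpen O) (hne : O.Nonempty) :
    ∃ x ∈ O, DenseSlices G (insert i F) (update p i x) := by
  have hslice : ∀ k, ∀ᶠ x in residual (X i),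
      Dense {z | update z i x ∈ {z | F.piecewise p z ∈ G k}} := fun k =>
    eventually_residual_dense_update_mem
      ((hGo k).preimage (F.continuous_piecewise_right p)) (hp k) i
  obtain ⟨x, hxO, hx⟩ := (dense_of_mem_residual (eventually_countable_forall.2 hslice)
    ).inter_open_nonempty O hO hne
  refine ⟨x, hxO, fun k => ?_⟩
  convert hx k using 3 with z
  rw [Set.piecewise_insert_update hi]
  rfl

theorem exists_seq_of_forall_exists_succ {α : Type*} (P : ℕ → α → Prop) (R : ℕ → α → α → Prop)
    {a₀ : α} (h₀ : P 0 a₀) (step : ∀ n a, P n a → ∃ b, P (n + 1) b ∧ R n a b) :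
    ∃ f : ℕ → α, f 0 = a₀ ∧ ∀ n, P n (f n) ∧ R n (f n) (f (n + 1)) := by
  choose! g hgP hgR using step
  let f : ℕ → α := fun n => Nat.rec a₀ (fun n a => g n a) n
  have hP : ∀ n, P n (f n) := fun n => by
    induction n with
    | zero => exact h₀
    | succ n ih => exact hgP n _ ih
  exact ⟨f, rfl, fun n => ⟨hP n, hgR n _ (hP n)⟩⟩

theorem DenseSlices.exists_next_stage [SecondCountableTopology (∀ i, X i)]
    [∀ i, BaireSpace (X i)] {G : ℕ → Set (∀ i, X i)} {e : ι → ℕ} (hGo : ∀ k, IsOpen (G k))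
    (he : Injective e) {n : ℕ} {p : ∀ i, X i} (hp : DenseSlices G {j | e j < n} p)
    {C : ∀ i, Set (X i)} (hC : IsOpenBox C) :
    ∃ p' C', IsOpenBox C' ∧ C' ≤ C ∧ (∀ z ∈ univ.pi C', {j | e j < n}.piecewise p z ∈ G n) ∧
      (∀ j, e j ≠ n → p' j = p j) ∧ (∀ j, e j = n → p' j ∈ C' j) ∧
      DenseSlices G {j | e j < n + 1} p' := by
  classical
  have hopen : IsOpen {z | {j | e j < n}.piecewise p z ∈ G n} :=
    (hGo n).preimage (continuous_piecewise_right _ p)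
  obtain ⟨C', hC', hC'C, hC'G⟩ := hC.exists_le_pi_subset hopen (hp n)
  by_cases hn : ∃ i, e i = n
  · obtain ⟨i, rfl⟩ := hn
    obtain ⟨x, hxC', hx⟩ :=
      hp.exists_update hGo (lt_irrefl (e i)) (hC'.isOpen i) (hC'.nonempty i)
    refine ⟨update p i x, C', hC', hC'C, hC'G,
      fun j hj => update_of_ne (ne_of_apply_ne e hj) _ _,
      fun j hj => by rw [he hj, update_self]; exact hxC', ?_⟩
    convert hx using 2
    ext j
    change e j < e i + 1 ↔ j = i ∨ e j < e i
    rw [← he.eq_iff]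
    omega
  · refine ⟨p, C', hC', hC'C, hC'G, fun _ _ => rfl, fun j hj => absurd ⟨j, hj⟩ hn, ?_⟩
    convert hp using 2
    ext j
    have : e j ≠ n := fun h => hn ⟨j, h⟩
    change e j < n + 1 ↔ e j < n
    omega

omit [∀ i, TopologicalSpace (X i)] in
theorem exists_mem_of_stages {G : ℕ → Set (∀ i, X i)} {e : ι → ℕ} {p : ℕ → ∀ i, X i}
    {C : ℕ → ∀ i, Set (X i)} (hCne : ∀ n i, (C n i).Nonempty) (hCle : ∀ n, C (n + 1) ≤ C n)
    (hG : ∀ n, ∀ z ∈ univ.pi (C (n + 1)), {j | e j < n}.piecewise (p n) z ∈ G n)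
    (hp : ∀ n j, e j ≠ n → p (n + 1) j = p n j)
    (hpC : ∀ n j, e j = n → p (n + 1) j ∈ C (n + 1) j) :
    ∃ x ∈ univ.pi (C 0), ∀ n, x ∈ G n := by
  set x : ∀ i, X i := fun j => p (e j + 1) j
  have hstab : ∀ j n, e j < n → p n j = x j := by
    intro j n h
    induction n, h using Nat.le_induction with
    | base => rfl
    | succ n h ih => rw [hp n j (by omega), ih]
  have hxC : ∀ j n, n ≤ e j + 1 → x j ∈ C n j := fun j n h =>
    antitone_nat_of_succ_le hCle h j (hpC (e j) j rfl)
  refine ⟨x, fun j _ => hxC j 0 (Nat.zero_le _), fun n => ?_⟩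
  -- the box of stage `n + 1` may constrain frozen coordinates too: use a point of it there
  obtain ⟨w, hw⟩ := univ_pi_nonempty_iff.2 (hCne (n + 1))
  convert hG n ({j | e j < n}.piecewise w x) fun j _ => ?_ using 1
  · ext j
    by_cases hj : e j < n
    · simp [hj, hstab j n hj]
    · simp [hj]
  · by_cases hj : e j < n
    · simpa [hj] using hw j trivial
    · simpa [hj] using hxC j (n + 1) (by omega)

theorem baireSpace_pi_of_countable [Countable ι] [∀ i, BaireSpace (X i)]
    [∀ i, SecondCountableTopology (X i)] : BaireSpace (∀ i, X i) := by
  obtain ⟨e, he⟩ := exists_injective_nat ι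
  refine ⟨fun G hGo hGd => dense_iff_inter_open.2 fun U hU ⟨u, hu⟩ => ?_⟩
  obtain ⟨C₀, hC₀, -, hC₀U⟩ := exists_isOpenBox_mem_subset hU hu
  have h₀ : ∀ z, {j | e j < 0}.piecewise u z = z := fun z =>
    funext fun j => piecewise_eq_of_notMem _ _ _ (Nat.not_lt_zero (e j))
  obtain ⟨s, hs₀, hs⟩ := exists_seq_of_forall_exists_succ
    (fun n s => DenseSlices G {j | e j < n} s.1 ∧ IsOpenBox s.2)
    (fun n s s' => s'.2 ≤ s.2 ∧ (∀ z ∈ univ.pi s'.2, {j | e j < n}.piecewise s.1 z ∈ G n) ∧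
      (∀ j, e j ≠ n → s'.1 j = s.1 j) ∧ (∀ j, e j = n → s'.1 j ∈ s'.2 j))
    (a₀ := (u, C₀)) ⟨fun k => by simpa only [h₀, ofPred_mem_eq] using hGd k, hC₀⟩
    fun n s ⟨hp, hC⟩ => by
      obtain ⟨p', C', hC', hC'C, hC'G, hp'p, hp'C', hp'⟩ := hp.exists_next_stage hGo he hC
      exact ⟨(p', C'), ⟨hp', hC'⟩, hC'C, hC'G, hp'p, hp'C'⟩
  obtain ⟨x, hx₀, hxG⟩ := exists_mem_of_stages (fun n => (hs n).1.2.nonempty)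
    (fun n => (hs n).2.1) (fun n => (hs n).2.2.1) (fun n => (hs n).2.2.2.1)
    fun n => (hs n).2.2.2.2
  rw [hs₀] at hx₀
  exact ⟨x, hC₀U hx₀, mem_iInter.2 hxG⟩

theorem exists_countable_closure {γ : Type*} (π : γ → ι) (hπ : ∀ i, (π ⁻¹' {i}).Countable)
    (r : Set γ → Set ι) (hr : ∀ s, s.Finite → (r s).Countable) :
    ∃ S : Set ι, S.Countable ∧ ∀ s, s.Finite → s ⊆ π ⁻¹' S → r s ⊆ S := by
  let Φ : Set ι → Set ι := fun T => T ∪ ⋃ s ∈ {s | s.Finite ∧ s ⊆ π ⁻¹' T}, r s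
  have hΦ : ∀ T, T.Countable → (Φ T).Countable := fun T hT =>
    hT.union <| (countable_ofPred_finite_subset <| biUnion_preimage_singleton π T ▸
      hT.biUnion fun i _ => hπ i).biUnion fun s hs => hr s hs.1
  let S : ℕ → Set ι := fun t => Φ^[t] ∅
  have hS : ∀ t, S (t + 1) = Φ (S t) := fun t => iterate_succ_apply' Φ t ∅
  have hmono : Monotone S := monotone_nat_of_le_succ fun t => hS t ▸ subset_union_left
  refine ⟨⋃ t, S t, countable_iUnion fun t => ?_, fun s hs hsS => ?_⟩
  · induction t with
    | zero => exact countable_empty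
    | succ t ih => exact hS t ▸ hΦ _ ih
  · rw [preimage_iUnion, ← hs.coe_toFinset] at hsS
    obtain ⟨t, ht⟩ := (hmono.directed_le.mono_comp _ fun _ _ h => preimage_mono h
      ).exists_mem_subset_of_finset_subset_biUnion hsS
    rw [hs.coe_toFinset] at ht
    have hsT : s ∈ {s | s.Finite ∧ s ⊆ π ⁻¹' S t} := ⟨hs, ht⟩
    calc r s ⊆ Φ (S t) := subset_union_of_subset_right (subset_biUnion_of_mem (u := r) hsT) _
      _ = S (t + 1) := (hS t).symm
      _ ⊆ ⋃ t, S t := subset_iUnion S (t + 1)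

section CountableSupport

variable [∀ i, SecondCountableTopology (X i)]

variable (X) in
def basicCylinder (s : Set (Σ i, countableBasis (X i))) : Set (∀ i, X i) :=
  {z | ∀ a ∈ s, z a.1 ∈ (a.2 : Set (X a.1))}

theorem isOpen_basicCylinder {s : Set (Σ i, countableBasis (X i))} (hs : s.Finite) :
    IsOpen (basicCylinder X s) := by
  have : basicCylinder X s = ⋂ a ∈ s, (fun z => z a.1) ⁻¹' (a.2 : Set (X a.1)) := by
    ext; simp [basicCylinder]
  rw [this]
  exact hs.isOpen_biInter fun a _ =>
    (isOpen_of_mem_countableBasis a.2.2).preimage (continuous_apply _)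

theorem exists_basicCylinder_piecewise_mem {O : Set (∀ i, X i)} (hO : IsOpen O) {o : ∀ i, X i}
    (ho : o ∈ O) (S : Set ι) [DecidablePred (· ∈ S)] :
    ∃ s, s.Finite ∧ s ⊆ Sigma.fst ⁻¹' S ∧ o ∈ basicCylinder X s ∧
      ∀ w ∈ basicCylinder X s, S.piecewise w o ∈ O := by
  obtain ⟨C, hC, hoC, hCO⟩ := exists_isOpenBox_mem_subset hO ho
  choose B hB hoB hBC using fun j =>
    (isBasis_countableBasis (X j)).exists_subset_of_mem_open (hoC j trivial) (hC.isOpen j)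
  let b : ι → Σ i, countableBasis (X i) := fun j => ⟨j, B j, hB j⟩
  refine ⟨b '' ({j | C j ≠ univ} ∩ S), (hC.finite_ne_univ.inter_of_left S).image b,
    image_subset_iff.2 fun j hj => hj.2, ?_, fun w hw => hCO fun j _ => ?_⟩
  · rintro _ ⟨j, -, rfl⟩
    exact hoB j
  · by_cases hjS : j ∈ S
    · rw [piecewise_eq_of_mem _ _ _ hjS]
      by_cases hjC : C j = univ
      · exact hjC ▸ trivial
      · exact hBC j (hw (b j) (mem_image_of_mem b ⟨hjC, hjS⟩))
    · rw [piecewise_eq_of_notMem _ _ _ hjS]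
      exact hoC j trivial

theorem exists_countable_dependsOn_dense_subset {G : Set (∀ i, X i)} (hGo : IsOpen G)
    (hGd : Dense G) : ∃ S : Set ι, S.Countable ∧
      ∃ H ⊆ G, IsOpen H ∧ Dense H ∧ DependsOn (· ∈ H) S := by
  classical
  choose! V hVsub hVo hVne I hIfin hVI using fun (s : Set (Σ i, countableBasis (X i)))
    (hs : s.Finite) => exists_open_finite_dependsOn_subset ((isOpen_basicCylinder hs).inter hGo)
  have hfiber : ∀ i, (Sigma.fst ⁻¹' {i} : Set (Σ i, countableBasis (X i))).Countable := by
    intro i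
    have := (countable_countableBasis (X i)).to_subtype
    exact (countable_range (Sigma.mk i)).mono (by rintro ⟨j, V⟩ (rfl : j = i); exact ⟨V, rfl⟩)
  -- every basic cylinder over `S` contains a nonempty open subset of `G` depending only on `S`
  obtain ⟨S, hSc, hS⟩ :=
    exists_countable_closure Sigma.fst hfiber I fun s hs => (hIfin s hs).countable
  let T : Set (Set (Σ i, countableBasis (X i))) := {s | s.Finite ∧ s ⊆ Sigma.fst ⁻¹' S}
  refine ⟨S, hSc, ⋃ s ∈ T, V s,
    iUnion₂_subset fun s hs => (hVsub s hs.1).trans inter_subset_right,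
    isOpen_biUnion fun s hs => hVo s hs.1, dense_iff_inter_open.2 fun O hO ⟨o, ho⟩ => ?_,
    dependsOn_mem_biUnion fun s hs => (hVI s hs.1).mono (hS s hs.1 hs.2)⟩
  obtain ⟨s, hs, hsS, hos, hsO⟩ := exists_basicCylinder_piecewise_mem hO ho S
  obtain ⟨w, hw⟩ := hVne s hs <|
    (hGd.inter_open_nonempty _ (isOpen_basicCylinder hs) ⟨o, hos⟩).imp fun _ h => ⟨h.1, h.2⟩
  have hwS : S.piecewise w o ∈ V s :=
    ((hVI s hs).mono (hS s hs hsS) fun j hj => piecewise_eq_of_mem _ _ _ hj).mpr hw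
  exact ⟨_, hsO w (hVsub s hs hw).1, mem_biUnion ⟨hs, hsS⟩ hwS⟩

end CountableSupport

theorem dense_iInter_of_dependsOn [∀ i, Nonempty (X i)] {S : Set ι}
    [BaireSpace (∀ i : S, X i)] {H : ℕ → Set (∀ i, X i)} (hHo : ∀ k, IsOpen (H k))
    (hHd : ∀ k, Dense (H k)) (hHS : ∀ k, DependsOn (· ∈ H k) S) : Dense (⋂ k, H k) := by
  classical
  have hr : IsOpenQuotientMap (S.domRestrict : (∀ i, X i) → ∀ i : S, X i) :=
    isOpenQuotientMap_fst.comp (Homeomorph.piEquivPiSubtypeProd (· ∈ S) X).isOpenQuotientMap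
  have hH : ∀ k, S.domRestrict ⁻¹' (S.domRestrict '' H k) = H k := fun k => by
    refine Subset.antisymm ?_ (subset_preimage_image _ _)
    rintro x ⟨y, hy, hyx⟩
    exact (hHS k fun i hi => congrFun hyx ⟨i, hi⟩).mp hy
  have : ⋂ k, H k = S.domRestrict ⁻¹' ⋂ k, S.domRestrict '' H k := by
    simp only [preimage_iInter, hH]
  rw [this, hr.dense_preimage_iff]
  exact dense_iInter_of_isOpen_nat (fun k => hr.isOpenMap _ (hHo k))
    fun k => hr.dense_preimage_iff.1 ((hH k).symm ▸ hHd k)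

end

/-- Oxtoby: an arbitrary product of second countable Baire spaces is Baire. -/
theorem baire_product_of_secondCountable (ι : Type*) (X : ι → Type*)
    [∀ i, TopologicalSpace (X i)] [∀ i, BaireSpace (X i)]
    [∀ i, SecondCountableTopology (X i)] : BaireSpace (∀ i, X i) := by
  refine ⟨fun G hGo hGd => ?_⟩
  rcases isEmpty_or_nonempty (∀ i, X i) with hP | hP
  · exact fun x => hP.elim x
  obtain ⟨p⟩ := hP
  have : ∀ i, Nonempty (X i) := fun i => ⟨p i⟩
  choose S hS H hHG hHo hHd hHS using
    fun k => exists_countable_dependsOn_dense_subset (hGo k) (hGd k)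
  have : Countable (⋃ k, S k) := (countable_iUnion hS).to_subtype
  have : BaireSpace (∀ i : ↑(⋃ k, S k), X i) := baireSpace_pi_of_countable
  exact (dense_iInter_of_dependsOn hHo hHd fun k => (hHS k).mono (subset_iUnion S k)).mono
    (iInter_mono hHG)
end
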